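/- Fix T > 0, an integer d ≥ 1, and real numbers β₁, …, β_d. Let Q be a d×d substochastic matrix with zero diagonal and Qⁿ → 0, and let ψ be the associated regulator map. Then ψ is Lipschitz continuous on ∏_{i=1}^d D^{β_i}[0,T] with respect to the product J₁ distance: there exists a constant C < ∞ such that for all ξ = (ξ⁽¹⁾,…,ξ⁽ᵈ⁾) and ζ = (ζ⁽¹⁾,…,ζ⁽ᵈ⁾) with ξ⁽ⁱ⁾, ζ⁽ⁱ⁾ ∈ D^{β_i}[0,T] for each i, one has d_p(ψ(ξ), ψ(ζ)) ≤ C · d_p(ξ, ζ). -/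

import Mathlib

open Set Filter

noncomputable section

/-- `f` is càdlàg on `[0,T]`: right-continuous on `[0,T)` and with left limits on `(0,T]`. -/
def Cadlag (T : ℝ) (f : ℝ → ℝ) : Prop :=
  (∀ t ∈ Set.Ico (0:ℝ) T, Filter.Tendsto f (nhdsWithin t (Set.Ici t)) (nhds (f t))) ∧
  (∀ t ∈ Set.Ioc (0:ℝ) T, ∃ L : ℝ, Filter.Tendsto f (nhdsWithin t (Set.Iio t)) (nhds L))

/-- `lam` is a strictly increasing continuous bijection of `[0,T]` onto itself. -/
def IsTimeChange (T : ℝ) (lam : ℝ → ℝ) : Prop :=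
  StrictMonoOn lam (Set.Icc 0 T) ∧ ContinuousOn lam (Set.Icc 0 T) ∧
  Set.MapsTo lam (Set.Icc 0 T) (Set.Icc 0 T) ∧
  Set.SurjOn lam (Set.Icc 0 T) (Set.Icc 0 T) ∧ lam 0 = 0 ∧ lam T = T

/-- Uniform distance of two (bounded) functions over `[0,T]`. -/
def unifDist (T : ℝ) (f g : ℝ → ℝ) : ℝ :=
  sSup {r : ℝ | ∃ t ∈ Set.Icc (0:ℝ) T, r = |f t - g t|}

/-- The Skorokhod `J₁` distance on `[0,T]`. -/
def J1Dist (T : ℝ) (f g : ℝ → ℝ) : ℝ :=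
  sInf {r : ℝ | ∃ lam : ℝ → ℝ, IsTimeChange T lam ∧
    r = max (unifDist T (fun t => f (lam t)) g) (unifDist T lam id)}

/-- The product `J₁` distance on `d`-tuples of paths. -/
def prodJ1Dist (T : ℝ) {d : ℕ} (ξ ζ : Fin d → ℝ → ℝ) : ℝ :=
  ∑ i, J1Dist T (ξ i) (ζ i)

/-- A substochastic routing matrix with zero diagonal whose powers tend to zero. -/
def Substochastic {d : ℕ} (Q : Matrix (Fin d) (Fin d) ℝ) : Prop :=
  (∀ i j, 0 ≤ Q i j) ∧ (∀ i, Q i i = 0) ∧ (∀ i, ∑ j, Q i j ≤ 1) ∧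
  Filter.Tendsto (fun n : ℕ => Q ^ n) Filter.atTop (nhds 0)

/-- The reflection matrix `𝒬 = I - Qᵀ`. -/
def refMatrix {d : ℕ} (Q : Matrix (Fin d) (Fin d) ℝ) : Matrix (Fin d) (Fin d) ℝ :=
  1 - Q.transpose

/-- `ζ` belongs to the feasible regulator set `Ψ(ξ)`: each coordinate of `ζ` is a
nondecreasing càdlàg path, nonnegative at the origin, and `ξ + 𝒬 ζ ≥ 0` on `[0,T]`. -/
def Feasible (T : ℝ) {d : ℕ} (Q : Matrix (Fin d) (Fin d) ℝ)
    (ξ ζ : Fin d → ℝ → ℝ) : Prop :=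
  (∀ i, Cadlag T (ζ i) ∧ MonotoneOn (ζ i) (Set.Icc 0 T) ∧ 0 ≤ ζ i 0) ∧
  (∀ t ∈ Set.Icc (0:ℝ) T, ∀ i, 0 ≤ ξ i t + ∑ j, refMatrix Q i j * ζ j t)

/-- The regulator map `ψ`, defined coordinatewise and pointwise as the infimum of the
feasible regulator set. -/
def regulator (T : ℝ) {d : ℕ} (Q : Matrix (Fin d) (Fin d) ℝ)
    (ξ : Fin d → ℝ → ℝ) : Fin d → ℝ → ℝ :=
  fun i t => sInf {z : ℝ | ∃ ζ, Feasible T Q ξ ζ ∧ z = ζ i t}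

/-- The content map `φ(ξ) = ξ + 𝒬 ψ(ξ)`. -/
def content (T : ℝ) {d : ℕ} (Q : Matrix (Fin d) (Fin d) ℝ)
    (ξ : Fin d → ℝ → ℝ) : Fin d → ℝ → ℝ :=
  fun i t => ξ i t + ∑ j, refMatrix Q i j * regulator T Q ξ j t

/-- `D^β[0,T]`: càdlàg paths `f` with `f 0 ≥ 0` such that `t ↦ f t - β t` is nondecreasing. -/
def DBeta (T β : ℝ) (f : ℝ → ℝ) : Prop :=
  Cadlag T f ∧ 0 ≤ f 0 ∧ MonotoneOn (fun t => f t - β * t) (Set.Icc 0 T)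

/-!
Because `Qⁿ → 0`, a truncated Neumann series gives `w ≥ 0` with `𝒬 w ≥ 1`, so adding a multiple
of `w` to a regulator creates slack in every coordinate. The pointwise infimum `ψ(ξ)` is itself
feasible and minimal. If every `ξ i` decreases at rate at most `b`, capping a near-optimal
regulator by a ramp of slope `b • w` shows that `ψ(ξ)` is `b • w`-Lipschitz in time. Consequently,
if `ζ` lies above `ξ` up to a shift of `δ` in time and space, `ψ(ξ) + δ (1 + 2 b ∑ w) • w` is
feasible for `ζ`. A `J₁`-distance below `δ` provides such shifts in both directions, so `ψ(ξ)` and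
`ψ(ζ)` are uniformly `O(δ)`-close, which bounds their `J₁`-distance through the identity time
change.
-/

open scoped Matrix Topology

theorem exists_nonneg_one_le_sub_vecMul {ι : Type*} [Fintype ι] [DecidableEq ι]
    {Q : Matrix ι ι ℝ} (hQ0 : ∀ i j, 0 ≤ Q i j) (hQ : Tendsto (fun n : ℕ => Q ^ n) atTop (𝓝 0)) :
    ∃ w : ι → ℝ, 0 ≤ w ∧ 1 ≤ w - w ᵥ* Q := by
  set u : ℕ → ι → ℝ := fun n => 1 ᵥ* Q ^ n
  have hu_succ (n : ℕ) : u (n + 1) = u n ᵥ* Q := by simp [u, pow_succ, Matrix.vecMul_vecMul]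
  have hu_nonneg (n : ℕ) : 0 ≤ u n := by
    induction n with
    | zero => simp [u, Matrix.vecMul_one, zero_le_one]
    | succ n ih =>
      rw [hu_succ]
      exact fun i => Finset.sum_nonneg fun j _ => mul_nonneg (ih j) (hQ0 j i)
  have hu_lim : Tendsto u atTop (𝓝 0) := by
    simpa [u, Function.comp_def] using
      ((continuous_const.matrix_vecMul continuous_id).tendsto 0).comp hQ
  obtain ⟨N, hN⟩ : ∃ N, ∀ i, u N i < 1 / 2 :=
    (eventually_all.2 fun i => (tendsto_pi_nhds.1 hu_lim i).eventually_lt_const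
      (by norm_num)).exists
  refine ⟨(2 : ℝ) • ∑ n ∈ Finset.range N, u n, ?_, fun i => ?_⟩
  · exact smul_nonneg zero_le_two (Finset.sum_nonneg fun n _ => hu_nonneg n)
  · have htelescope :
        (2 : ℝ) • ∑ n ∈ Finset.range N, u n - ((2 : ℝ) • ∑ n ∈ Finset.range N, u n) ᵥ* Q
          = (2 : ℝ) • (1 - u N) := by
      rw [Matrix.smul_vecMul, Matrix.sum_vecMul, ← smul_sub, ← Finset.sum_sub_distrib]
      simp only [← hu_succ, Finset.sum_range_sub']
      simp [u, Matrix.vecMul_one]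
    rw [htelescope]
    simp only [Pi.one_apply, Pi.smul_apply, Pi.sub_apply, smul_eq_mul]
    linarith [hN i]

theorem ContinuousOn.cadlag {T : ℝ} {f : ℝ → ℝ} (hf : ContinuousOn f (Icc 0 T)) :
    Cadlag T f := by
  refine ⟨fun t ht => ?_, fun t ht => ⟨f t, ?_⟩⟩
  · rw [← nhdsWithin_Icc_eq_nhdsGE ht.2]
    exact (hf t (Ico_subset_Icc_self ht)).mono (Icc_subset_Icc_left ht.1)
  · refine (tendsto_nhdsWithin_mono_left Iio_subset_Iic_self ?_)
    rw [← nhdsWithin_Icc_eq_nhdsLE ht.1]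
    exact (hf t (Ioc_subset_Icc_self ht)).mono (Icc_subset_Icc_right ht.2)

theorem Cadlag.min {T : ℝ} {f g : ℝ → ℝ} (hf : Cadlag T f) (hg : Cadlag T g) :
    Cadlag T fun t => min (f t) (g t) := by
  refine ⟨fun t ht => (hf.1 t ht).min (hg.1 t ht), fun t ht => ?_⟩
  obtain ⟨Lf, hLf⟩ := hf.2 t ht
  obtain ⟨Lg, hLg⟩ := hg.2 t ht
  exact ⟨_, hLf.min hLg⟩

section Regulator

variable {d : ℕ} {T : ℝ} {Q : Matrix (Fin d) (Fin d) ℝ} {ξ ζ : Fin d → ℝ → ℝ} {i : Fin d}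
  {t : ℝ}

theorem sum_refMatrix_mul (Q : Matrix (Fin d) (Fin d) ℝ) (v : Fin d → ℝ) (i : Fin d) :
    ∑ j, refMatrix Q i j * v j = v i - ∑ j, v j * Q j i := by
  simp [refMatrix, Matrix.one_apply, mul_sub, Finset.sum_sub_distrib, mul_comm]

theorem Feasible.nonneg (hT : 0 ≤ T) (hζ : Feasible T Q ξ ζ) (i : Fin d) (ht : t ∈ Icc 0 T) :
    0 ≤ ζ i t :=
  (hζ.1 i).2.2.trans ((hζ.1 i).2.1 ⟨le_rfl, hT⟩ ht ht.1)

theorem regulator_le (hT : 0 ≤ T) (hζ : Feasible T Q ξ ζ) (i : Fin d) (ht : t ∈ Icc 0 T) :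
    regulator T Q ξ i t ≤ ζ i t :=
  csInf_le ⟨0, by rintro _ ⟨η, hη, rfl⟩; exact hη.nonneg hT i ht⟩ ⟨ζ, hζ, rfl⟩

theorem le_regulator (hne : ∃ ζ, Feasible T Q ξ ζ) {c : ℝ}
    (h : ∀ ζ, Feasible T Q ξ ζ → c ≤ ζ i t) : c ≤ regulator T Q ξ i t := by
  obtain ⟨ζ, hζ⟩ := hne
  exact le_csInf ⟨_, ζ, hζ, rfl⟩ (by rintro _ ⟨η, hη, rfl⟩; exact h η hη)

theorem exists_feasible_lt_regulator_add (hne : ∃ ζ, Feasible T Q ξ ζ) {ε : ℝ} (hε : 0 < ε) :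
    ∃ ζ, Feasible T Q ξ ζ ∧ ζ i t < regulator T Q ξ i t + ε := by
  obtain ⟨ζ₀, hζ₀⟩ := hne
  obtain ⟨_, ⟨ζ, hζ, rfl⟩, hlt⟩ :=
    exists_lt_of_csInf_lt (s := {z | ∃ ζ, Feasible T Q ξ ζ ∧ z = ζ i t}) ⟨_, ζ₀, hζ₀, rfl⟩
      (lt_add_of_pos_right (regulator T Q ξ i t) hε)
  exact ⟨ζ, hζ, hlt⟩

theorem regulator_nonneg (hT : 0 ≤ T) (hne : ∃ ζ, Feasible T Q ξ ζ) (i : Fin d)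
    (ht : t ∈ Icc 0 T) : 0 ≤ regulator T Q ξ i t :=
  le_regulator hne fun _ hζ => hζ.nonneg hT i ht

theorem monotoneOn_regulator (hT : 0 ≤ T) (hne : ∃ ζ, Feasible T Q ξ ζ) (i : Fin d) :
    MonotoneOn (regulator T Q ξ i) (Icc 0 T) := fun _ hs _ ht hst =>
  le_regulator hne fun _ hζ => (regulator_le hT hζ i hs).trans ((hζ.1 i).2.1 hs ht hst)

theorem add_sum_refMatrix_mul_regulator_nonneg (hT : 0 ≤ T) (hQ0 : ∀ i j, 0 ≤ Q i j)
    (hne : ∃ ζ, Feasible T Q ξ ζ) (ht : t ∈ Icc 0 T) (i : Fin d) :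
    0 ≤ ξ i t + ∑ j, refMatrix Q i j * regulator T Q ξ j t := by
  refine le_of_forall_pos_le_add fun ε hε => ?_
  obtain ⟨ζ, hζ, hlt⟩ := exists_feasible_lt_regulator_add (i := i) (t := t) hne hε
  have hcon := hζ.2 t ht i
  have hsum : ∑ j, regulator T Q ξ j t * Q j i ≤ ∑ j, ζ j t * Q j i :=
    Finset.sum_le_sum fun j _ => mul_le_mul_of_nonneg_right (regulator_le hT hζ j ht) (hQ0 j i)
  rw [sum_refMatrix_mul] at hcon ⊢
  linarith

end Regulator

def DriftBoundedBelow (T b : ℝ) (f : ℝ → ℝ) : Prop :=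
  ∀ s ∈ Icc 0 T, ∀ t ∈ Icc 0 T, s ≤ t → f s - b * (t - s) ≤ f t

theorem DBeta.driftBoundedBelow {T β b : ℝ} {f : ℝ → ℝ} (hf : DBeta T β f) (hβ : -β ≤ b) :
    DriftBoundedBelow T b f := fun s hs t ht hst => by
  have hmono : f s - β * s ≤ f t - β * t := hf.2.2 hs ht hst
  have := mul_le_mul_of_nonneg_right hβ (sub_nonneg.2 hst)
  linarith

section DriftBoundedBelow

variable {d : ℕ} {T b : ℝ} {Q : Matrix (Fin d) (Fin d) ℝ} {w : Fin d → ℝ} {ξ : Fin d → ℝ → ℝ}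

theorem exists_feasible (hT : 0 ≤ T) (hb : 0 ≤ b) (hw0 : 0 ≤ w) (hw : 1 ≤ w - w ᵥ* Q)
    (hξ0 : ∀ i, 0 ≤ ξ i 0) (hξ : ∀ i, DriftBoundedBelow T b (ξ i)) :
    ∃ ζ, Feasible T Q ξ ζ := by
  refine ⟨fun i _ => b * T * w i, fun i => ⟨continuousOn_const.cadlag, monotoneOn_const,
    mul_nonneg (mul_nonneg hb hT) (hw0 i)⟩, fun t ht i => ?_⟩
  have hwi : 1 ≤ w i - ∑ j, w j * Q j i := hw i
  have hξi : ξ i 0 - b * (t - 0) ≤ ξ i t := hξ i 0 ⟨le_rfl, hT⟩ t ht ht.1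
  have hbt : b * t ≤ b * T := mul_le_mul_of_nonneg_left ht.2 hb
  have hgap := mul_le_mul_of_nonneg_left hwi (mul_nonneg hb hT)
  rw [sum_refMatrix_mul]
  simp only [mul_assoc, ← Finset.mul_sum] at hgap ⊢
  linarith [hξ0 i]

theorem Feasible.min_ramp (hT : 0 ≤ T) (hQ0 : ∀ i j, 0 ≤ Q i j) (hb : 0 ≤ b) (hw0 : 0 ≤ w)
    (hw : 1 ≤ w - w ᵥ* Q) (hξ : ∀ i, DriftBoundedBelow T b (ξ i)) {m : Fin d → ℝ → ℝ}
    (hm : Feasible T Q ξ m) {s : ℝ} (hs : s ∈ Icc 0 T) :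
    Feasible T Q ξ fun j u => min (m j u) (m j s + b * w j * max (u - s) 0) := by
  set g : Fin d → ℝ → ℝ := fun j u => m j s + b * w j * max (u - s) 0
  have hslope (j : Fin d) : 0 ≤ b * w j := mul_nonneg hb (hw0 j)
  have hg_mono (j : Fin d) : Monotone (g j) := fun x y hxy => by
    have := hslope j
    simp only [g]
    gcongr
  refine ⟨fun j => ⟨(hm.1 j).1.min (Continuous.continuousOn (by fun_prop)).cadlag,
    fun x hx y hy hxy => min_le_min ((hm.1 j).2.1 hx hy hxy) (hg_mono j hxy),
    le_min (hm.1 j).2.2 (add_nonneg (hm.nonneg hT j hs)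
      (mul_nonneg (hslope j) (le_max_right _ _)))⟩, fun u hu i => ?_⟩
  rw [sum_refMatrix_mul]
  have hmu := hm.2 u hu i
  rw [sum_refMatrix_mul] at hmu
  have hle_m : ∑ j, min (m j u) (g j u) * Q j i ≤ ∑ j, m j u * Q j i :=
    Finset.sum_le_sum fun j _ => mul_le_mul_of_nonneg_right (min_le_left _ _) (hQ0 j i)
  suffices ∑ j, min (m j u) (g j u) * Q j i - ξ i u ≤ g i u by
    have := le_min (by linarith : ∑ j, min (m j u) (g j u) * Q j i - ξ i u ≤ m i u) this
    linarith
  rcases le_total u s with hus | hsu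
  · have : m i u ≤ g i u := ((hm.1 i).2.1 hu hs hus).trans
      (le_add_of_nonneg_right (mul_nonneg (hslope i) (le_max_right _ _)))
    linarith
  · -- past `s`, the ramp's slope `b * w i` exceeds the routed slopes `b * ∑ j, w j * Q j i`
    -- by at least `b`, which offsets the drift of `ξ i`
    have hms := hm.2 s hs i
    rw [sum_refMatrix_mul] at hms
    have hle_g : ∑ j, min (m j u) (g j u) * Q j i
        ≤ ∑ j, m j s * Q j i + b * (u - s) * ∑ j, w j * Q j i := by
      refine (Finset.sum_le_sum fun j _ =>
        mul_le_mul_of_nonneg_right (min_le_right _ _) (hQ0 j i)).trans_eq ?_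
      simp only [g, max_eq_left (sub_nonneg.2 hsu), add_mul, Finset.sum_add_distrib,
        Finset.mul_sum]
      exact congrArg _ (Finset.sum_congr rfl fun j _ => by ring)
    have hgap : b * (u - s) * 1 ≤ b * (u - s) * (w i - ∑ j, w j * Q j i) :=
      mul_le_mul_of_nonneg_left (hw i) (mul_nonneg hb (sub_nonneg.2 hsu))
    have hgi : g i u = m i s + b * w i * (u - s) := by
      simp only [g, max_eq_left (sub_nonneg.2 hsu)]
    linarith [hξ i s hs u hu hsu]

end DriftBoundedBelow

section Lipschitz

variable {d : ℕ} {T b δ : ℝ} {Q : Matrix (Fin d) (Fin d) ℝ} {w : Fin d → ℝ}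
  {ξ ζ : Fin d → ℝ → ℝ}

theorem regulator_le_add_mul_sub (hT : 0 ≤ T) (hQ0 : ∀ i j, 0 ≤ Q i j) (hb : 0 ≤ b)
    (hw0 : 0 ≤ w) (hw : 1 ≤ w - w ᵥ* Q) (hξ : ∀ i, DriftBoundedBelow T b (ξ i))
    (hne : ∃ ζ, Feasible T Q ξ ζ) (i : Fin d) {s t : ℝ} (hs : s ∈ Icc 0 T) (ht : t ∈ Icc 0 T)
    (hst : s ≤ t) : regulator T Q ξ i t ≤ regulator T Q ξ i s + b * w i * (t - s) := by
  refine le_of_forall_pos_le_add fun ε hε => ?_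
  obtain ⟨m, hm, hlt⟩ := exists_feasible_lt_regulator_add (i := i) (t := s) hne hε
  calc regulator T Q ξ i t ≤ min (m i t) (m i s + b * w i * max (t - s) 0) :=
        regulator_le hT (hm.min_ramp hT hQ0 hb hw0 hw hξ hs) i ht
    _ ≤ m i s + b * w i * (t - s) := by
        rw [max_eq_left (sub_nonneg.2 hst)]
        exact min_le_right _ _
    _ ≤ regulator T Q ξ i s + b * w i * (t - s) + ε := by linarith

theorem abs_regulator_sub_le (hT : 0 ≤ T) (hQ0 : ∀ i j, 0 ≤ Q i j) (hb : 0 ≤ b)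
    (hw0 : 0 ≤ w) (hw : 1 ≤ w - w ᵥ* Q) (hξ : ∀ i, DriftBoundedBelow T b (ξ i))
    (hne : ∃ ζ, Feasible T Q ξ ζ) (i : Fin d) {x y : ℝ} (hx : x ∈ Icc 0 T) (hy : y ∈ Icc 0 T) :
    |regulator T Q ξ i x - regulator T Q ξ i y| ≤ b * w i * |x - y| := by
  wlog hxy : x ≤ y generalizing x y
  · rw [abs_sub_comm, abs_sub_comm x]
    exact this hy hx (le_of_not_ge hxy)
  have hmono := monotoneOn_regulator hT hne i hx hy hxy
  have hlip := regulator_le_add_mul_sub hT hQ0 hb hw0 hw hξ hne i hx hy hxy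
  rw [abs_of_nonpos (sub_nonpos.2 hmono), abs_of_nonpos (sub_nonpos.2 hxy)]
  linarith

theorem continuousOn_regulator (hT : 0 ≤ T) (hQ0 : ∀ i j, 0 ≤ Q i j) (hb : 0 ≤ b)
    (hw0 : 0 ≤ w) (hw : 1 ≤ w - w ᵥ* Q) (hξ : ∀ i, DriftBoundedBelow T b (ξ i))
    (hne : ∃ ζ, Feasible T Q ξ ζ) (i : Fin d) :
    ContinuousOn (regulator T Q ξ i) (Icc 0 T) :=
  (LipschitzOnWith.of_dist_le' fun _ hx _ hy => by
    simpa only [Real.dist_eq] using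
      abs_regulator_sub_le hT hQ0 hb hw0 hw hξ hne i hx hy).continuousOn

def NearlyAbove (T δ : ℝ) (g f : ℝ → ℝ) : Prop :=
  ∀ t ∈ Icc 0 T, ∃ s ∈ Icc 0 T, |s - t| ≤ δ ∧ f s - δ ≤ g t

theorem regulator_le_regulator_add (hT : 0 ≤ T) (hQ0 : ∀ i j, 0 ≤ Q i j) (hb : 0 ≤ b)
    (hw0 : 0 ≤ w) (hw : 1 ≤ w - w ᵥ* Q) (hξ : ∀ i, DriftBoundedBelow T b (ξ i))
    (hne : ∃ ζ, Feasible T Q ξ ζ) (hδ : 0 ≤ δ) (hζξ : ∀ i, NearlyAbove T δ (ζ i) (ξ i))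
    (i : Fin d) {t : ℝ} (ht : t ∈ Icc 0 T) :
    regulator T Q ζ i t ≤ regulator T Q ξ i t + δ * (1 + 2 * b * ∑ j, w j) * w i := by
  set ψ := regulator T Q ξ
  set W := ∑ j, w j
  set A := δ * (1 + 2 * b * W)
  have hW : 0 ≤ W := Finset.sum_nonneg fun j _ => hw0 j
  have hA : 0 ≤ A := mul_nonneg hδ (by positivity)
  -- `ψ + A • w` is feasible for `ζ`: the slack `A • 𝒬 w ≥ A` pays for a lag of `δ` in time
  -- and space
  refine regulator_le hT (ζ := fun j u => ψ j u + A * w j) ⟨fun j => ⟨?_, ?_, ?_⟩, ?_⟩ i ht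
  · exact ((continuousOn_regulator hT hQ0 hb hw0 hw hξ hne j).add continuousOn_const).cadlag
  · exact fun x hx y hy hxy => add_le_add_left (monotoneOn_regulator hT hne j hx hy hxy) _
  · exact add_nonneg (regulator_nonneg hT hne j ⟨le_rfl, hT⟩) (mul_nonneg hA (hw0 j))
  intro u hu k
  obtain ⟨s, hs, hsu, hξs⟩ := hζξ k u hu
  have hshift (j : Fin d) {x y : ℝ} (hx : x ∈ Icc 0 T) (hy : y ∈ Icc 0 T) (hxy : |x - y| ≤ δ) :
      ψ j x ≤ ψ j y + b * w j * δ := by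
    have := (le_abs_self _).trans (abs_regulator_sub_le hT hQ0 hb hw0 hw hξ hne j hx hy)
    linarith [mul_le_mul_of_nonneg_left hxy (mul_nonneg hb (hw0 j))]
  have hcon := add_sum_refMatrix_mul_regulator_nonneg hT hQ0 hne hs k
  rw [sum_refMatrix_mul] at hcon ⊢
  have hsum : ∑ j, (ψ j u + A * w j) * Q j k
      ≤ ∑ j, ψ j s * Q j k + (b * δ + A) * ∑ j, w j * Q j k := by
    rw [Finset.mul_sum, ← Finset.sum_add_distrib]
    refine Finset.sum_le_sum fun j _ => ?_
    nlinarith [hshift j hu hs (by rwa [abs_sub_comm]), hQ0 j k]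
  have hwk : 1 ≤ w k - ∑ j, w j * Q j k := hw k
  have hwW : w k ≤ W := Finset.single_le_sum (fun j _ => hw0 j) (Finset.mem_univ k)
  have hbδ : 0 ≤ b * δ := mul_nonneg hb hδ
  have hQwW : ∑ j, w j * Q j k ≤ W := by linarith
  linarith [hshift k hs hu hsu, mul_le_mul_of_nonneg_left hwk hA,
    mul_le_mul_of_nonneg_left hwW hbδ, mul_le_mul_of_nonneg_left hQwW hbδ]

end Lipschitz

section Skorokhod

variable {T B r : ℝ} {f g : ℝ → ℝ}

theorem unifDist_nonneg : 0 ≤ unifDist T f g :=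
  Real.sSup_nonneg (by rintro _ ⟨t, -, rfl⟩; exact abs_nonneg _)

theorem abs_sub_le_unifDist (hB : ∀ t ∈ Icc 0 T, |f t - g t| ≤ B) {t : ℝ} (ht : t ∈ Icc 0 T) :
    |f t - g t| ≤ unifDist T f g :=
  le_csSup ⟨B, by rintro _ ⟨s, hs, rfl⟩; exact hB s hs⟩ ⟨t, ht, rfl⟩

theorem unifDist_le (hB0 : 0 ≤ B) (hB : ∀ t ∈ Icc 0 T, |f t - g t| ≤ B) : unifDist T f g ≤ B :=
  Real.sSup_le (by rintro _ ⟨t, ht, rfl⟩; exact hB t ht) hB0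

theorem isTimeChange_id (T : ℝ) : IsTimeChange T id :=
  ⟨strictMonoOn_id, continuousOn_id, mapsTo_id _, surjOn_id _, rfl, rfl⟩

theorem J1Dist_nonneg : 0 ≤ J1Dist T f g :=
  Real.sInf_nonneg (by rintro _ ⟨_, -, rfl⟩; exact le_max_of_le_right unifDist_nonneg)

theorem J1Dist_le_of_abs_sub_le (hT : 0 ≤ T) (hB : ∀ t ∈ Icc 0 T, |f t - g t| ≤ B) :
    J1Dist T f g ≤ B := by
  have hB0 : 0 ≤ B := (abs_nonneg _).trans (hB 0 ⟨le_rfl, hT⟩)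
  rw [J1Dist]
  refine le_trans (csInf_le ⟨0, ?_⟩ ⟨id, isTimeChange_id T, rfl⟩)
    (max_le (unifDist_le hB0 hB) (unifDist_le hB0 fun t _ => by simpa using hB0))
  rintro _ ⟨_, -, rfl⟩
  exact le_max_of_le_right unifDist_nonneg

theorem exists_timeChange_of_J1Dist_lt {Bf Bg : ℝ} (hf : ∀ t ∈ Icc 0 T, |f t| ≤ Bf)
    (hg : ∀ t ∈ Icc 0 T, |g t| ≤ Bg) (h : J1Dist T f g < r) :
    ∃ lam, IsTimeChange T lam ∧ ∀ t ∈ Icc 0 T, |f (lam t) - g t| < r ∧ |lam t - t| < r := by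
  obtain ⟨_, ⟨lam, hlam, rfl⟩, hlt⟩ := exists_lt_of_csInf_lt
    (s := {r | ∃ lam, IsTimeChange T lam ∧
      r = max (unifDist T (fun t => f (lam t)) g) (unifDist T lam id)})
    ⟨_, id, isTimeChange_id T, rfl⟩ h
  have hmaps := hlam.2.2.1
  refine ⟨lam, hlam, fun t ht => ⟨?_, ?_⟩⟩
  · exact (abs_sub_le_unifDist (fun s hs => (abs_sub _ _).trans
      (add_le_add (hf _ (hmaps hs)) (hg s hs))) ht).trans_lt ((le_max_left _ _).trans_lt hlt)
  · exact (abs_sub_le_unifDist (g := id) (fun s hs => abs_sub_le_of_nonneg_of_le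
      (hmaps hs).1 (hmaps hs).2 hs.1 hs.2) ht).trans_lt ((le_max_right _ _).trans_lt hlt)

theorem nearlyAbove_of_J1Dist_lt {Bf Bg : ℝ} (hf : ∀ t ∈ Icc 0 T, |f t| ≤ Bf)
    (hg : ∀ t ∈ Icc 0 T, |g t| ≤ Bg) (h : J1Dist T f g < r) :
    NearlyAbove T r g f ∧ NearlyAbove T r f g := by
  obtain ⟨lam, hlam, hclose⟩ := exists_timeChange_of_J1Dist_lt hf hg h
  refine ⟨fun t ht => ⟨lam t, hlam.2.2.1 ht, (hclose t ht).2.le, ?_⟩, fun t ht => ?_⟩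
  · linarith [(abs_lt.1 (hclose t ht).1).2]
  obtain ⟨s, hs, rfl⟩ := hlam.2.2.2.1 ht
  refine ⟨s, hs, by rw [abs_sub_comm]; exact (hclose s hs).2.le, ?_⟩
  linarith [(abs_lt.1 (hclose s hs).1).1]

end Skorokhod

theorem DBeta.abs_le {T β t : ℝ} {f : ℝ → ℝ} (hf : DBeta T β f) (ht : t ∈ Icc 0 T) :
    |f t| ≤ |f T| + |β| * T := by
  have hT : T ∈ Icc 0 T := ⟨ht.1.trans ht.2, le_rfl⟩
  have h0 : f 0 - β * 0 ≤ f t - β * t := hf.2.2 ⟨le_rfl, hT.1⟩ ht ht.1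
  have h1 : f t - β * t ≤ f T - β * T := hf.2.2 ht hT ht.2
  have hβt : |β * t| ≤ |β| * T := by
    rw [abs_mul, abs_of_nonneg ht.1]
    exact mul_le_mul_of_nonneg_left ht.2 (abs_nonneg β)
  have hβTt : |β * (T - t)| ≤ |β| * T := by
    rw [abs_mul, abs_of_nonneg (sub_nonneg.2 ht.2)]
    exact mul_le_mul_of_nonneg_left (by linarith [ht.1]) (abs_nonneg β)
  rw [_root_.abs_le]
  constructor <;> linarith [_root_.abs_le.1 hβt, _root_.abs_le.1 hβTt, le_abs_self (f T),
    abs_nonneg (f T), hf.2.1]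

theorem abs_regulator_sub_regulator_le {d : ℕ} {T δ : ℝ} {β : Fin d → ℝ}
    {Q : Matrix (Fin d) (Fin d) ℝ} {w : Fin d → ℝ} {ξ ζ : Fin d → ℝ → ℝ} (hT : 0 ≤ T)
    (hQ0 : ∀ i j, 0 ≤ Q i j) (hw0 : 0 ≤ w) (hw : 1 ≤ w - w ᵥ* Q)
    (hξ : ∀ i, DBeta T (β i) (ξ i)) (hζ : ∀ i, DBeta T (β i) (ζ i))
    (hδ : ∀ i, J1Dist T (ξ i) (ζ i) < δ) (i : Fin d) {t : ℝ} (ht : t ∈ Icc 0 T) :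
    |regulator T Q ξ i t - regulator T Q ζ i t| ≤
      δ * (1 + 2 * (∑ k, |β k|) * ∑ j, w j) * w i := by
  have hb : 0 ≤ ∑ k, |β k| := Finset.sum_nonneg fun k _ => abs_nonneg _
  have hdrift {f : ℝ → ℝ} {j : Fin d} (hf : DBeta T (β j) f) :
      DriftBoundedBelow T (∑ k, |β k|) f :=
    hf.driftBoundedBelow ((neg_le_abs _).trans
      (Finset.single_le_sum (fun k _ => abs_nonneg (β k)) (Finset.mem_univ j)))
  have hne {η : Fin d → ℝ → ℝ} (hη : ∀ j, DBeta T (β j) (η j)) : ∃ ζ, Feasible T Q η ζ :=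
    exists_feasible hT hb hw0 hw (fun j => (hη j).2.1) fun j => hdrift (hη j)
  have hδ0 : 0 ≤ δ := J1Dist_nonneg.trans (hδ i).le
  have hnear (j : Fin d) := nearlyAbove_of_J1Dist_lt (fun _ ht => (hξ j).abs_le ht)
    (fun _ ht => (hζ j).abs_le ht) (hδ j)
  rw [abs_sub_le_iff]
  constructor
  · linarith [regulator_le_regulator_add hT hQ0 hb hw0 hw (fun j => hdrift (hζ j)) (hne hζ) hδ0
      (fun j => (hnear j).2) i ht]
  · linarith [regulator_le_regulator_add hT hQ0 hb hw0 hw (fun j => hdrift (hξ j)) (hne hξ) hδ0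
      (fun j => (hnear j).1) i ht]

theorem regulator_map_lipschitz_prodJ1_general
    (T : ℝ) (hT : 0 < T) (d : ℕ) (β : Fin d → ℝ)
    (Q : Matrix (Fin d) (Fin d) ℝ) (hQ : Substochastic Q) :
    ∃ C : ℝ, ∀ ξ ζ : Fin d → ℝ → ℝ,
      (∀ i, DBeta T (β i) (ξ i)) → (∀ i, DBeta T (β i) (ζ i)) →
      prodJ1Dist T (regulator T Q ξ) (regulator T Q ζ) ≤ C * prodJ1Dist T ξ ζ := by
  obtain ⟨w, hw0, hw⟩ := exists_nonneg_one_le_sub_vecMul hQ.1 hQ.2.2.2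
  set C := (1 + 2 * (∑ k, |β k|) * ∑ j, w j) * ∑ j, w j
  refine ⟨C, fun ξ ζ hξ hζ => ?_⟩
  set S := prodJ1Dist T ξ ζ
  have hbound (ε : ℝ) (hε : 0 < ε) :
      prodJ1Dist T (regulator T Q ξ) (regulator T Q ζ) ≤ C * (S + ε) := by
    have hδ (i : Fin d) : J1Dist T (ξ i) (ζ i) < S + ε :=
      (Finset.single_le_sum (fun j _ => J1Dist_nonneg) (Finset.mem_univ i)).trans_lt
        (lt_add_of_pos_right S hε)
    calc prodJ1Dist T (regulator T Q ξ) (regulator T Q ζ)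
        ≤ ∑ i, (S + ε) * (1 + 2 * (∑ k, |β k|) * ∑ j, w j) * w i :=
          Finset.sum_le_sum fun i _ => J1Dist_le_of_abs_sub_le hT.le fun _ ht =>
            abs_regulator_sub_regulator_le hT.le hQ.1 hw0 hw hξ hζ hδ i ht
      _ = C * (S + ε) := by rw [← Finset.mul_sum]; ring
  have hlim : Tendsto (fun ε => C * (S + ε)) (𝓝[>] 0) (𝓝 (C * S)) :=
    ((by fun_prop : Continuous fun ε => C * (S + ε)).tendsto' 0 _ (by ring)).mono_left
      nhdsWithin_le_nhds
  exact ge_of_tendsto hlim (eventually_nhdsWithin_of_forall hbound)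

/-- The regulator map `ψ` is Lipschitz continuous on
`∏_{i=1}^d D^{β_i}[0,T]` with respect to the product `J₁` distance. -/
theorem regulator_map_lipschitz_prodJ1
    (T : ℝ) (hT : 0 < T) (d : ℕ) (hd : 1 ≤ d) (β : Fin d → ℝ)
    (Q : Matrix (Fin d) (Fin d) ℝ) (hQ : Substochastic Q) :
    ∃ C : ℝ, ∀ ξ ζ : Fin d → ℝ → ℝ,
      (∀ i, DBeta T (β i) (ξ i)) → (∀ i, DBeta T (β i) (ζ i)) →
      prodJ1Dist T (regulator T Q ξ) (regulator T Q ζ) ≤ C * prodJ1Dist T ξ ζ :=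
  regulator_map_lipschitz_prodJ1_general T hT d β Q hQ
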